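/- Let (a_k)_{k≥0} be a sequence of nonnegative reals and let g(z) = Σ_{k≥0} a_k z^k with radius of convergence R. Suppose u, v : ℝ → ℝ are measurable with ‖u‖_∞ ≤ B, ‖v‖_∞ ≤ B, u - v ∈ L²(ℝ), and B < R. Then Σ_{k≥0} a_k (u^k - v^k) defines an L² function and ‖Σ_{k≥0} a_k (u^k - v^k)‖_2 ≤ g'(B) ‖u - v‖_2. -/

import Mathlib

/-!
Write `u^k - v^k = (u - v) Σ_{m<k} u^m v^{k-1-m}`; when `|u|, |v| ≤ B` the second factor is at
most `k B^(k-1)`, so with `a_k ≥ 0` the series `Σ a_k (u^k - v^k)` is dominated pointwise by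
`g'(B) |u - v|`, and `g'(B) = Σ k a_k B^(k-1)` converges because `B` lies inside the radius of
convergence of `g`. The `L²` bound then follows from this pointwise bound.
-/

open MeasureTheory Real

theorem FormalMultilinearSeries.summable_nat_mul_norm_mul_pow_sub_one_ofScalars
    {𝕜 : Type*} [NontriviallyNormedField 𝕜] {c : ℕ → 𝕜} {B : ℝ} (hB : 0 ≤ B)
    (hR : ENNReal.ofReal B < (ofScalars 𝕜 c).radius) :
    Summable fun k : ℕ => (k : ℝ) * ‖c k‖ * B ^ (k - 1) := by
  obtain ⟨r, hBr, hr⟩ := ENNReal.lt_iff_exists_nnreal_btwn.mp hR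
  have hBr : B < r := by
    rwa [← ENNReal.ofReal_coe_nnreal, ENNReal.ofReal_lt_ofReal_iff_of_nonneg hB] at hBr
  have hr0 : (0 : ℝ) < r := hB.trans_lt hBr
  have hc : Summable fun k => ‖c k‖ * (r : ℝ) ^ k := by
    simpa only [ofScalars_norm] using (ofScalars 𝕜 c).summable_norm_mul_pow hr
  set t := B / r
  have ht : ‖t‖ < 1 := by
    rw [norm_of_nonneg (by positivity)]
    exact (div_lt_one hr0).mpr hBr
  have hgeom : Summable fun n : ℕ => ((n : ℝ) + 1) * t ^ n := by
    simpa [add_mul] using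
      (summable_pow_mul_geometric_of_norm_lt_one 1 ht).add (summable_geometric_of_norm_lt_one ht)
  -- `(n + 1) t^n` is bounded by the sum `M` of the series it belongs to.
  set M := ∑' n : ℕ, ((n : ℝ) + 1) * t ^ n
  rw [← summable_nat_add_iff 1]
  refine Summable.of_nonneg_of_le (fun n => by positivity) (fun n => ?_)
    (((summable_nat_add_iff 1).mpr hc).mul_left (M / r))
  calc ((n + 1 : ℕ) : ℝ) * ‖c (n + 1)‖ * B ^ (n + 1 - 1)
      = ((n + 1) * t ^ n / r) * (‖c (n + 1)‖ * (r : ℝ) ^ (n + 1)) := by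
        simp only [t, div_pow, Nat.add_sub_cancel]
        field_simp
        push_cast
        ring
    _ ≤ (M / r) * (‖c (n + 1)‖ * (r : ℝ) ^ (n + 1)) := by
        gcongr
        exact hgeom.le_tsum n fun j _ => by positivity

theorem Measurable.tsum_of_summable {α β : Type*} [MeasurableSpace α] [TopologicalSpace β]
    [TopologicalSpace.PseudoMetrizableSpace β] [MeasurableSpace β] [BorelSpace β]
    [AddCommMonoid β] [MeasurableAdd₂ β] {f : ℕ → α → β} (hf : ∀ k, Measurable (f k))
    (hs : ∀ x, Summable fun k => f k x) :
    Measurable fun x => ∑' k, f k x :=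
  measurable_of_tendsto_metrizable (fun _ => Finset.measurable_sum _ fun k _ => hf k)
    (tendsto_pi_nhds.mpr fun x => (hs x).hasSum.tendsto_sum_nat)

section PowSubPow

variable {a : ℕ → ℝ} {B x y : ℝ}

theorem norm_mul_pow_sub_pow_le (hx : |x| ≤ B) (hy : |y| ≤ B) (k : ℕ) :
    ‖a k * (x ^ k - y ^ k)‖ ≤ k * ‖a k‖ * B ^ (k - 1) * ‖x - y‖ := by
  rw [norm_mul, norm_eq_abs (x ^ k - y ^ k), norm_eq_abs (x - y)]
  calc ‖a k‖ * |x ^ k - y ^ k| ≤ ‖a k‖ * (|x - y| * k * max |x| |y| ^ (k - 1)) := by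
        gcongr
        exact abs_pow_sub_pow_le x y k
    _ ≤ ‖a k‖ * (|x - y| * k * B ^ (k - 1)) := by gcongr; exact max_le hx hy
    _ = k * ‖a k‖ * B ^ (k - 1) * |x - y| := by ring

theorem summable_mul_pow_sub_pow (hs : Summable fun k : ℕ => (k : ℝ) * ‖a k‖ * B ^ (k - 1))
    (hx : |x| ≤ B) (hy : |y| ≤ B) :
    Summable fun k => a k * (x ^ k - y ^ k) :=
  .of_norm_bounded (hs.mul_right ‖x - y‖) (norm_mul_pow_sub_pow_le hx hy)

theorem norm_tsum_mul_pow_sub_pow_le (hs : Summable fun k : ℕ => (k : ℝ) * ‖a k‖ * B ^ (k - 1))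
    (hx : |x| ≤ B) (hy : |y| ≤ B) :
    ‖∑' k, a k * (x ^ k - y ^ k)‖ ≤
      (∑' k : ℕ, (k : ℝ) * ‖a k‖ * B ^ (k - 1)) * ‖x - y‖ :=
  tsum_of_norm_bounded (hs.hasSum.mul_right _) (norm_mul_pow_sub_pow_le hx hy)

end PowSubPow

theorem powerSeries_nonlinearity_L2_lipschitz_general
    (a : ℕ → ℝ) (ha : ∀ k, 0 ≤ a k) (B : ℝ)
    (hR : ENNReal.ofReal B < (FormalMultilinearSeries.ofScalars ℝ a).radius)
    (u v : ℝ → ℝ) (hu : Measurable u) (hv : Measurable v)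
    (hub : ∀ x, |u x| ≤ B) (hvb : ∀ x, |v x| ≤ B)
    (huv : MemLp (fun x => u x - v x) 2) :
    MemLp (fun x => ∑' k, a k * ((u x) ^ k - (v x) ^ k)) 2 ∧
      eLpNorm (fun x => ∑' k, a k * ((u x) ^ k - (v x) ^ k)) 2 volume ≤
        ENNReal.ofReal (∑' k : ℕ, (k : ℝ) * a k * B ^ (k - 1)) *
          eLpNorm (fun x => u x - v x) 2 volume := by
  have hB : 0 ≤ B := (abs_nonneg _).trans (hub 0)
  have hs := FormalMultilinearSeries.summable_nat_mul_norm_mul_pow_sub_one_ofScalars hB hR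
  have hbound (x : ℝ) : ‖∑' k, a k * ((u x) ^ k - (v x) ^ k)‖ ≤
      (∑' k : ℕ, (k : ℝ) * a k * B ^ (k - 1)) * ‖u x - v x‖ := by
    simpa only [norm_of_nonneg (ha _)] using norm_tsum_mul_pow_sub_pow_le hs (hub x) (hvb x)
  have hmeas : Measurable fun x => ∑' k, a k * ((u x) ^ k - (v x) ^ k) :=
    .tsum_of_summable (fun k => by fun_prop)
      fun x => summable_mul_pow_sub_pow hs (hub x) (hvb x)
  exact ⟨huv.of_le_mul hmeas.aestronglyMeasurable (.of_forall hbound),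
    eLpNorm_le_mul_eLpNorm_of_ae_le_mul (.of_forall hbound) 2⟩

/-- Lipschitz estimate in `L²` for the power-series nonlinearity: if `a_k ≥ 0`,
`g(z) = Σ a_k z^k` has radius of convergence `> B`, `|u| ≤ B`, `|v| ≤ B`, and
`u - v ∈ L²`, then `Σ a_k (u^k - v^k) ∈ L²` with norm at most `g'(B) ‖u - v‖₂`,
where `g'(B) = Σ_k k a_k B^(k-1)`. -/
theorem powerSeries_nonlinearity_L2_lipschitz
    (a : ℕ → ℝ) (ha : ∀ k, 0 ≤ a k) (B : ℝ) (hB : 0 ≤ B)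
    (hR : ENNReal.ofReal B < (FormalMultilinearSeries.ofScalars ℝ a).radius)
    (u v : ℝ → ℝ) (hu : Measurable u) (hv : Measurable v)
    (hub : ∀ x, |u x| ≤ B) (hvb : ∀ x, |v x| ≤ B)
    (huv : MemLp (fun x => u x - v x) 2) :
    MemLp (fun x => ∑' k, a k * ((u x) ^ k - (v x) ^ k)) 2 ∧
      eLpNorm (fun x => ∑' k, a k * ((u x) ^ k - (v x) ^ k)) 2 volume ≤
        ENNReal.ofReal (∑' k : ℕ, (k : ℝ) * a k * B ^ (k - 1)) *
          eLpNorm (fun x => u x - v x) 2 volume :=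
  powerSeries_nonlinearity_L2_lipschitz_general a ha B hR u v hu hv hub hvb huv
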